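/- arXiv:1602.05343 — 3 statements merged into one kernel-verified Lean document; each statement's English description precedes it below -/
import Mathlib

section
/- For every real number x and every integer n ≥ 0, (n+1) · U_n(x) = Σ_{l=0}^{n} T_l(x) · U_{n-l}(x). -/
/-- `D = 1 - 2x·t + t²` as a formal power series in `t` over `ℝ`. -/
noncomputable def Dser (x : ℝ) : PowerSeries ℝ :=
  1 - PowerSeries.C (2 * x) * PowerSeries.X + PowerSeries.X ^ 2

/-- The Chebyshev polynomial of the first kind `T_n(x)`,
the `n`-th coefficient of `(1-t²)·D⁻¹`. -/
noncomputable def chebT (x : ℝ) (n : ℕ) : ℝ :=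
  PowerSeries.coeff n ((1 - PowerSeries.X ^ 2) * (Dser x)⁻¹)

/-- The Chebyshev polynomial of the second kind `U_n(x)`,
the `n`-th coefficient of `D⁻¹`. -/
noncomputable def chebU (x : ℝ) (n : ℕ) : ℝ :=
  PowerSeries.coeff n (Dser x)⁻¹

/-!
The generating functions are `U(t) = D⁻¹` and `T(t) = (1 - t²) D⁻¹`. Since `D - t D' = 1 - t²`,
`(t U)' = D⁻¹ - t D' D⁻² = (D - t D') D⁻² = T U`, and the identity is the comparison of the
coefficients of `tⁿ` on both sides.
-/

open PowerSeries

theorem PowerSeries.coeff_derivative_X_mul {R : Type*} [CommSemiring R] (f : R⟦X⟧) (n : ℕ) :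
    coeff n (d⁄dX R (X * f)) = (n + 1) * coeff n f := by
  rw [coeff_derivative, coeff_succ_X_mul, mul_comm]

theorem PowerSeries.derivative_X_mul_inv {K : Type*} [Field K] {f : K⟦X⟧}
    (hf : constantCoeff f ≠ 0) :
    d⁄dX K (X * f⁻¹) = (f - X * d⁄dX K f) * f⁻¹ ^ 2 := by
  rw [Derivation.leibniz, derivative_inv', derivative_X, smul_eq_mul, smul_eq_mul]
  linear_combination (-f⁻¹) * PowerSeries.mul_inv_cancel f hf

theorem constantCoeff_Dser (x : ℝ) : constantCoeff (Dser x) = 1 := by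
  simp [Dser]

theorem Dser_sub_X_mul_derivative (x : ℝ) : Dser x - X * d⁄dX ℝ (Dser x) = 1 - X ^ 2 := by
  simp only [Dser, map_add, map_sub, Derivation.map_one_eq_zero, Derivation.leibniz,
    Derivation.leibniz_pow, derivative_X, derivative_C, smul_eq_mul]
  ring

theorem derivative_X_mul_inv_Dser (x : ℝ) :
    d⁄dX ℝ (X * (Dser x)⁻¹) = (1 - X ^ 2) * (Dser x)⁻¹ * (Dser x)⁻¹ := by
  rw [derivative_X_mul_inv (by simp [constantCoeff_Dser]), Dser_sub_X_mul_derivative,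
    mul_assoc, ← sq]

/-- `(n+1) U_n(x) = Σ_{l=0}^n T_l(x) U_{n-l}(x)`. -/
theorem stmt11 (x : ℝ) (n : ℕ) :
    ((n : ℝ) + 1) * chebU x n = ∑ l ∈ Finset.range (n + 1), chebT x l * chebU x (n - l) := by
  have h := congrArg (coeff n) (derivative_X_mul_inv_Dser x)
  rwa [coeff_derivative_X_mul, coeff_mul, Finset.Nat.sum_antidiagonal_eq_sum_range_succ_mk] at h
end

section
/- For every real number x and every integer n ≥ 0, the n-th coefficient of the formal power series (1 - t²)·(D⁻¹)² equals (n+1) · U_n(x). -/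
namespace PowerSeries

theorem coeff_derivative_X_mul_s12 {R : Type*} [CommSemiring R] (f : R⟦X⟧) (n : ℕ) :
    coeff n (d⁄dX R (X * f)) = (n + 1) * coeff n f := by
  rw [coeff_derivative, coeff_succ_X_mul, mul_comm]

theorem derivative_X_mul_inv_s12 {k : Type*} [Field k] (f : k⟦X⟧) (hf : constantCoeff f ≠ 0) :
    d⁄dX k (X * f⁻¹) = (f - X * d⁄dX k f) * f⁻¹ ^ 2 := by
  have hf_inv : f * f⁻¹ = 1 := PowerSeries.mul_inv_cancel f hf
  calc d⁄dX k (X * f⁻¹) = X * (-f⁻¹ ^ 2 * d⁄dX k f) + f * f⁻¹ * f⁻¹ := by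
        rw [Derivation.leibniz, derivative_inv', hf_inv, one_mul, smul_eq_mul, smul_eq_mul,
          derivative_X, mul_one]
    _ = (f - X * d⁄dX k f) * f⁻¹ ^ 2 := by ring

end PowerSeries

open PowerSeries

/-- the `n`-th coefficient of `(1 - t²)·(D⁻¹)²` is `(n+1) U_n(x)`. -/
theorem stmt12 (x : ℝ) (n : ℕ) :
    PowerSeries.coeff n ((1 - PowerSeries.X ^ 2) * (Dser x)⁻¹ ^ 2) =
      ((n : ℝ) + 1) * chebU x n := by
  rw [← Dser_sub_X_mul_derivative, ← derivative_X_mul_inv_s12 _ (by simp [constantCoeff_Dser]),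
    coeff_derivative_X_mul_s12, chebU]
end

section
/- For every real number x and every integer n ≥ 0, the n-th coefficient of the formal power series (2x·t - 2t²)·(D⁻¹)² equals n · U_n(x). -/
/-! The series `(2x·t - 2t²)·D⁻²` is `t · d/dt D⁻¹`, and the Euler operator `t · d/dt` multiplies
the `n`-th coefficient by `n`. -/

open PowerSeries

theorem PowerSeries.coeff_X_mul_derivative {R : Type*} [CommSemiring R] (f : R⟦X⟧) (n : ℕ) :
    coeff n (X * d⁄dX R f) = n * coeff n f := by
  cases n with
  | zero => simp
  | succ n => rw [coeff_succ_X_mul, coeff_derivative, mul_comm, Nat.cast_succ]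

theorem derivative_Dser (x : ℝ) : d⁄dX ℝ (Dser x) = 2 * X - C (2 * x) := by
  simp [Dser, sub_eq_neg_add]

theorem X_mul_derivative_inv_Dser (x : ℝ) :
    X * d⁄dX ℝ (Dser x)⁻¹ = (C (2 * x) * X - 2 * X ^ 2) * (Dser x)⁻¹ ^ 2 := by
  rw [derivative_inv', derivative_Dser]
  ring

/-- the `n`-th coefficient of `(2x·t - 2t²)·(D⁻¹)²` is `n·U_n(x)`. -/
theorem stmt13 (x : ℝ) (n : ℕ) :
    PowerSeries.coeff n
        ((PowerSeries.C (2 * x) * PowerSeries.X - 2 * PowerSeries.X ^ 2) * (Dser x)⁻¹ ^ 2) =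
      (n : ℝ) * chebU x n := by
  rw [← X_mul_derivative_inv_Dser, coeff_X_mul_derivative, chebU]
end
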